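/- arXiv:1306.1593 — 6 statements merged into one kernel-verified Lean document; each statement's English description precedes it below -/
import Mathlib

section
/- In the poset P of intervals [i,j] with 1 ≤ i ≤ j ≤ n ordered by inclusion, if an interval [i,j] with j - i = a belongs to an antichain of cardinality b, then b ≤ n - a. -/
/-!
Split the antichain `A ∋ [i,j]` according to whether an interval starts before `i`.
Distinct members of an antichain have distinct left endpoints and distinct right endpoints.
The intervals starting before `i` therefore have distinct left endpoints in `[1, i-1]`. Those
starting at or after `i` cannot lie inside `[i,j]`, so they end in `[j, n]`, again at distinct
points. Hence `#A ≤ (i - 1) + (n - j + 1) = n - (j - i)`.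
-/

open Finset

def IsIntervalAntichain (A : Set (ℕ × ℕ)) : Prop :=
  ∀ p ∈ A, ∀ q ∈ A, p ≠ q → ¬(q.1 ≤ p.1 ∧ p.2 ≤ q.2)

namespace IsIntervalAntichain

variable {A : Set (ℕ × ℕ)} (hA : IsIntervalAntichain A) {p q : ℕ × ℕ}
include hA

theorem snd_lt_snd_of_fst_le (hp : p ∈ A) (hq : q ∈ A) (hpq : p ≠ q) (h : p.1 ≤ q.1) :
    p.2 < q.2 :=
  lt_of_not_ge fun h' => hA q hq p hp hpq.symm ⟨h, h'⟩

theorem injOn_fst : Set.InjOn Prod.fst A := by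
  intro p hp q hq h
  by_contra hpq
  have := hA.snd_lt_snd_of_fst_le hp hq hpq h.le
  have := hA.snd_lt_snd_of_fst_le hq hp (Ne.symm hpq) h.ge
  omega

theorem injOn_snd : Set.InjOn Prod.snd A := by
  intro p hp q hq h
  by_contra hpq
  rcases le_total p.1 q.1 with hle | hle
  · exact (hA.snd_lt_snd_of_fst_le hp hq hpq hle).ne h
  · exact (hA.snd_lt_snd_of_fst_le hq hp (Ne.symm hpq) hle).ne h.symm

theorem snd_le_snd_of_fst_le (hp : p ∈ A) (hq : q ∈ A) (h : p.1 ≤ q.1) : p.2 ≤ q.2 := by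
  rcases eq_or_ne p q with rfl | hpq
  · exact le_rfl
  · exact (hA.snd_lt_snd_of_fst_le hp hq hpq h).le

end IsIntervalAntichain

variable {A : Finset (ℕ × ℕ)}

theorem card_filter_fst_lt_le (hA : IsIntervalAntichain A) (hpos : ∀ p ∈ A, 1 ≤ p.1) (i : ℕ) :
    #(A.filter (·.1 < i)) ≤ i - 1 :=
  calc #(A.filter (·.1 < i))
    _ ≤ #(Ico 1 i) := card_le_card_of_injOn Prod.fst
        (fun p hp => by
          obtain ⟨hpA, hpi⟩ := mem_filter.1 hp
          exact mem_Ico.2 ⟨hpos p hpA, hpi⟩)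
        (hA.injOn_fst.mono (coe_subset.2 (filter_subset _ _)))
    _ = i - 1 := Nat.card_Ico 1 i

theorem card_filter_not_fst_lt_le (hA : IsIntervalAntichain A) {n i j : ℕ}
    (hbound : ∀ p ∈ A, p.2 ≤ n) (hij : (i, j) ∈ A) :
    #(A.filter (¬ ·.1 < i)) ≤ n + 1 - j :=
  calc #(A.filter (¬ ·.1 < i))
    _ ≤ #(Icc j n) := card_le_card_of_injOn Prod.snd
        (fun p hp => by
          obtain ⟨hpA, hpi⟩ := mem_filter.1 hp
          exact mem_Icc.2 ⟨hA.snd_le_snd_of_fst_le hij hpA (not_lt.1 hpi), hbound p hpA⟩)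
        (hA.injOn_snd.mono (coe_subset.2 (filter_subset _ _)))
    _ = n + 1 - j := Nat.card_Icc j n

theorem stmt_2_general (n i j a b : ℕ) (ha : j - i = a)
    (A : Finset (ℕ × ℕ))
    (hsub : ∀ p ∈ A, 1 ≤ p.1 ∧ p.1 ≤ p.2 ∧ p.2 ≤ n)
    (hanti : ∀ p ∈ A, ∀ q ∈ A, p ≠ q → ¬(q.1 ≤ p.1 ∧ p.2 ≤ q.2))
    (hmem : (i, j) ∈ A) (hb : A.card = b) :
    b ≤ n - a := by
  subst ha hb
  have hA : IsIntervalAntichain A := hanti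
  obtain ⟨hi, hij, hjn⟩ : 1 ≤ i ∧ i ≤ j ∧ j ≤ n := hsub _ hmem
  have hleft := card_filter_fst_lt_le hA (fun p hp => (hsub p hp).1) i
  have hright := card_filter_not_fst_lt_le hA (fun p hp => (hsub p hp).2.2) hmem
  rw [← card_filter_add_card_filter_not (·.1 < i)]
  omega

/-- In the poset of intervals `[i,j] ⊆ [1,n]` ordered by inclusion, if an
interval `[i,j]` with `j - i = a` belongs to an antichain of cardinality `b`, then
`b ≤ n - a`. -/
theorem stmt_2 (n i j a b : ℕ) (h1 : 1 ≤ i) (h2 : i ≤ j) (h3 : j ≤ n) (ha : j - i = a)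
    (A : Finset (ℕ × ℕ))
    (hsub : ∀ p ∈ A, 1 ≤ p.1 ∧ p.1 ≤ p.2 ∧ p.2 ≤ n)
    (hanti : ∀ p ∈ A, ∀ q ∈ A, p ≠ q → ¬(q.1 ≤ p.1 ∧ p.2 ≤ q.2))
    (hmem : (i, j) ∈ A) (hb : A.card = b) :
    b ≤ n - a :=
  stmt_2_general n i j a b ha A hsub hanti hmem hb
end

section
/- In the poset P of intervals [i,j] ⊆ [1,n] ordered by inclusion, no interval [i,j] with j - i ≥ 2 belongs to an antichain of cardinality n-1, provided n ≥ 3. -/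
/-!
Split an antichain `A` of intervals containing `[i,j]` by the position of the left endpoint
relative to `i`. Only `[i,j]` itself starts at `i`. The intervals starting before `i` have
pairwise distinct left endpoints in `[1,i)`. Those starting after `i` must end after `j`, as they
would otherwise lie inside `[i,j]`, and have pairwise distinct right endpoints in `(j,n]`.
Hence `|A| ≤ 1 + (i - 1) + (n - j) = n - (j - i) ≤ n - 2`.
-/

/-- `IntervalSubset (a, b) (c, d)` says `[a,b] ⊆ [c,d]`. -/
def IntervalSubset (p q : ℕ × ℕ) : Prop := q.1 ≤ p.1 ∧ p.2 ≤ q.2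

namespace IsAntichain

variable {s : Set (ℕ × ℕ)}

theorem injOn_fst_of_intervalSubset (hs : IsAntichain IntervalSubset s) :
    Set.InjOn Prod.fst s := by
  intro p hp q hq hfst
  rcases le_total p.2 q.2 with hle | hle
  · exact hs.eq hp hq ⟨hfst.ge, hle⟩
  · exact (hs.eq hq hp ⟨hfst.le, hle⟩).symm

theorem injOn_snd_of_intervalSubset (hs : IsAntichain IntervalSubset s) :
    Set.InjOn Prod.snd s := by
  intro p hp q hq hsnd
  rcases le_total p.1 q.1 with hle | hle
  · exact (hs.eq hq hp ⟨hle, hsnd.ge⟩).symm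
  · exact hs.eq hp hq ⟨hle, hsnd.le⟩

end IsAntichain

namespace Finset

variable {A : Finset (ℕ × ℕ)} {n i j : ℕ}

theorem card_filter_fst_lt_le (hA : IsAntichain IntervalSubset (A : Set (ℕ × ℕ)))
    (hpos : ∀ p ∈ A, 1 ≤ p.1) : (A.filter (·.1 < i)).card ≤ i - 1 := by
  have hmaps : Set.MapsTo Prod.fst (A.filter (·.1 < i) : Set (ℕ × ℕ)) (Ico 1 i) := by
    intro p hp
    rw [coe_filter] at hp
    exact mem_Ico.2 ⟨hpos p hp.1, hp.2⟩
  simpa using card_le_card_of_injOn Prod.fst hmaps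
    (hA.subset (coe_subset.2 (filter_subset _ _))).injOn_fst_of_intervalSubset

theorem card_filter_lt_fst_le (hA : IsAntichain IntervalSubset (A : Set (ℕ × ℕ)))
    (hle : ∀ p ∈ A, p.2 ≤ n) (hij : (i, j) ∈ A) : (A.filter (i < ·.1)).card ≤ n - j := by
  have hmaps : Set.MapsTo Prod.snd (A.filter (i < ·.1) : Set (ℕ × ℕ)) (Ioc j n) := by
    intro p hp
    rw [coe_filter] at hp
    have hj : j < p.2 := by
      by_contra! hpj
      exact hp.2.ne (congrArg Prod.fst (hA.eq hp.1 hij ⟨hp.2.le, hpj⟩)).symm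
    exact mem_Ioc.2 ⟨hj, hle p hp.1⟩
  simpa using card_le_card_of_injOn Prod.snd hmaps
    (hA.subset (coe_subset.2 (filter_subset _ _))).injOn_snd_of_intervalSubset

theorem subset_insert_filter_fst_lt_union (hA : IsAntichain IntervalSubset (A : Set (ℕ × ℕ)))
    (hij : (i, j) ∈ A) : A ⊆ insert (i, j) (A.filter (·.1 < i) ∪ A.filter (i < ·.1)) := by
  intro p hp
  rcases lt_trichotomy p.1 i with h | h | h
  · simp [hp, h]
  · simp [hA.injOn_fst_of_intervalSubset hp hij h]
  · simp [hp, h]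

theorem card_add_le_of_isAntichain_intervalSubset
    (hA : IsAntichain IntervalSubset (A : Set (ℕ × ℕ)))
    (hsub : ∀ p ∈ A, 1 ≤ p.1 ∧ p.1 ≤ p.2 ∧ p.2 ≤ n) (hij : (i, j) ∈ A) :
    A.card + j ≤ n + i := by
  have hL := card_filter_fst_lt_le (i := i) hA fun p hp => (hsub p hp).1
  have hR := card_filter_lt_fst_le hA (fun p hp => (hsub p hp).2.2) hij
  have hcover := card_le_card (subset_insert_filter_fst_lt_union hA hij)
  have hinsert := card_insert_le (i, j) (A.filter (·.1 < i) ∪ A.filter (i < ·.1))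
  have hunion := card_union_le (A.filter (·.1 < i)) (A.filter (i < ·.1))
  have hbounds := hsub _ hij
  omega

end Finset

theorem stmt_3_general (n i j : ℕ)
    (hji : 2 ≤ j - i)
    (A : Finset (ℕ × ℕ))
    (hsub : ∀ p ∈ A, 1 ≤ p.1 ∧ p.1 ≤ p.2 ∧ p.2 ≤ n)
    (hanti : ∀ p ∈ A, ∀ q ∈ A, p ≠ q → ¬(q.1 ≤ p.1 ∧ p.2 ≤ q.2))
    (hcard : A.card = n - 1) :
    (i, j) ∉ A := by
  intro hij
  have := A.card_add_le_of_isAntichain_intervalSubset hanti hsub hij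
  omega

/-- In the poset of intervals `[i,j] ⊆ [1,n]` ordered by inclusion, no interval
`[i,j]` with `j - i ≥ 2` belongs to an antichain of cardinality `n-1`, provided `n ≥ 3`. -/
theorem stmt_3 (n i j : ℕ) (hn : 3 ≤ n) (h1 : 1 ≤ i) (h2 : i ≤ j) (h3 : j ≤ n)
    (hji : 2 ≤ j - i)
    (A : Finset (ℕ × ℕ))
    (hsub : ∀ p ∈ A, 1 ≤ p.1 ∧ p.1 ≤ p.2 ∧ p.2 ≤ n)
    (hanti : ∀ p ∈ A, ∀ q ∈ A, p ≠ q → ¬(q.1 ≤ p.1 ∧ p.2 ≤ q.2))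
    (hcard : A.card = n - 1) :
    (i, j) ∉ A :=
  stmt_3_general n i j hji A hsub hanti hcard
end

section
/- In the poset P of intervals [i,j] ⊆ [1,n] ordered by inclusion (n ≥ 3), the set {[k,k+1] : 1 ≤ k ≤ n-1} is the unique maximal (n-1)-antichain: every antichain of cardinality n-1 is contained in the order ideal generated by this set. -/
namespace IntervalSubset

variable {A : Finset (ℕ × ℕ)} {p q : ℕ × ℕ}

theorem fst_injOn (hA : IsAntichain IntervalSubset (A : Set (ℕ × ℕ))) :
    Set.InjOn Prod.fst (A : Set (ℕ × ℕ)) := by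
  intro p hp q hq h
  rcases le_total p.2 q.2 with h2 | h2
  · exact hA.eq hp hq ⟨h.ge, h2⟩
  · exact (hA.eq hq hp ⟨h.le, h2⟩).symm

theorem snd_le_snd_of_fst_le (hA : IsAntichain IntervalSubset (A : Set (ℕ × ℕ)))
    (hp : p ∈ A) (hq : q ∈ A) (h : p.1 ≤ q.1) : p.2 ≤ q.2 := by
  by_contra! h2
  have := hA.eq hq hp ⟨h, h2.le⟩
  subst this
  exact h2.false

theorem snd_injOn (hA : IsAntichain IntervalSubset (A : Set (ℕ × ℕ))) :
    Set.InjOn Prod.snd (A : Set (ℕ × ℕ)) := by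
  intro p hp q hq h
  rcases le_total p.1 q.1 with h1 | h1
  · exact (hA.eq hq hp ⟨h1, h.ge⟩).symm
  · exact hA.eq hp hq ⟨h1, h.le⟩

theorem card_add_snd_le {n : ℕ} (hA : IsAntichain IntervalSubset (A : Set (ℕ × ℕ)))
    (hbound : ∀ q ∈ A, 1 ≤ q.1 ∧ q.2 ≤ n) (hp : p ∈ A) : A.card + p.2 ≤ n + p.1 := by
  have hleft : (A.filter (·.1 < p.1)).card ≤ p.1 - 1 := by
    rw [← Nat.card_Ico 1 p.1]
    refine Finset.card_le_card_of_injOn Prod.fst (fun q hq => ?_)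
      ((fst_injOn hA).mono (Finset.filter_subset _ A))
    obtain ⟨hqA, hlt⟩ := Finset.mem_filter.mp hq
    exact Finset.mem_Ico.mpr ⟨(hbound q hqA).1, hlt⟩
  have hright : (A.filter (¬ ·.1 < p.1)).card ≤ n + 1 - p.2 := by
    rw [← Nat.card_Icc p.2 n]
    refine Finset.card_le_card_of_injOn Prod.snd (fun q hq => ?_)
      ((snd_injOn hA).mono (Finset.filter_subset _ A))
    obtain ⟨hqA, hge⟩ := Finset.mem_filter.mp hq
    exact Finset.mem_Icc.mpr ⟨snd_le_snd_of_fst_le hA hp hqA (not_lt.mp hge), (hbound q hqA).2⟩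
  have hsplit := Finset.card_filter_add_card_filter_not (s := A) (·.1 < p.1)
  have := hbound p hp
  omega

theorem isAntichain_adjacent (s : Set ℕ) :
    IsAntichain IntervalSubset ((fun k => (k, k + 1)) '' s) := by
  rintro _ ⟨k, -, rfl⟩ _ ⟨l, -, rfl⟩ hne ⟨hlk, hkl⟩
  exact hne (by simp only at hlk hkl; rw [le_antisymm hlk (by omega)])

theorem exists_adjacent_of_snd_le_fst_add_one {n : ℕ} (h1 : 1 ≤ p.1) (hn : 2 ≤ n)
    (hp : p.2 ≤ p.1 + 1) (hpn : p.2 ≤ n) :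
    ∃ k ∈ Finset.Icc 1 (n - 1), IntervalSubset p (k, k + 1) :=
  ⟨min p.1 (n - 1), Finset.mem_Icc.mpr ⟨by omega, min_le_right _ _⟩, min_le_left _ _, by omega⟩

end IntervalSubset

open IntervalSubset in
theorem stmt_4_general (n : ℕ)
    (X : Finset (ℕ × ℕ)) (hX : X = (Finset.Icc 1 (n - 1)).image (fun k => (k, k + 1))) :
    ((∀ p ∈ X, ∀ q ∈ X, p ≠ q → ¬(q.1 ≤ p.1 ∧ p.2 ≤ q.2)) ∧ X.card = n - 1) ∧
    (∀ A : Finset (ℕ × ℕ),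
      (∀ p ∈ A, 1 ≤ p.1 ∧ p.1 ≤ p.2 ∧ p.2 ≤ n) →
      (∀ p ∈ A, ∀ q ∈ A, p ≠ q → ¬(q.1 ≤ p.1 ∧ p.2 ≤ q.2)) →
      A.card = n - 1 →
      ∀ p ∈ A, ∃ q ∈ X, q.1 ≤ p.1 ∧ p.2 ≤ q.2) := by
  subst hX
  refine ⟨⟨fun p hp q hq => ?_, ?_⟩, fun A hbound hA hcard p hp => ?_⟩
  · have := isAntichain_adjacent (Finset.Icc 1 (n - 1) : Set ℕ)
    rw [← Finset.coe_image] at this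
    exact this hp hq
  · rw [Finset.card_image_of_injective _ fun k l h => congrArg Prod.fst h, Nat.card_Icc]
    omega
  · have hsize := card_add_snd_le hA (fun q hq => ⟨(hbound q hq).1, (hbound q hq).2.2⟩) hp
    have hpos := Finset.card_pos.mpr ⟨p, hp⟩
    obtain ⟨h1, -, hpn⟩ := hbound p hp
    obtain ⟨k, hk, hpk⟩ :=
      exists_adjacent_of_snd_le_fst_add_one (n := n) h1 (by omega) (by omega) hpn
    exact ⟨(k, k + 1), Finset.mem_image_of_mem _ hk, hpk⟩

/-- In the poset of intervals `[i,j] ⊆ [1,n]` ordered by inclusion (`n ≥ 3`),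
the set `{[k,k+1] : 1 ≤ k ≤ n-1}` is the unique maximal `(n-1)`-antichain: it is an
antichain of cardinality `n-1`, and every antichain of cardinality `n-1` is contained in
the order ideal it generates. -/
theorem stmt_4 (n : ℕ) (hn : 3 ≤ n)
    (X : Finset (ℕ × ℕ)) (hX : X = (Finset.Icc 1 (n - 1)).image (fun k => (k, k + 1))) :
    ((∀ p ∈ X, ∀ q ∈ X, p ≠ q → ¬(q.1 ≤ p.1 ∧ p.2 ≤ q.2)) ∧ X.card = n - 1) ∧
    (∀ A : Finset (ℕ × ℕ),
      (∀ p ∈ A, 1 ≤ p.1 ∧ p.1 ≤ p.2 ∧ p.2 ≤ n) →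
      (∀ p ∈ A, ∀ q ∈ A, p ≠ q → ¬(q.1 ≤ p.1 ∧ p.2 ≤ q.2)) →
      A.card = n - 1 →
      ∀ p ∈ A, ∃ q ∈ X, q.1 ≤ p.1 ∧ p.2 ≤ q.2) :=
  stmt_4_general n X hX
end

section
/- Let P be the poset of intervals [i,j] with 1 ≤ i ≤ j ≤ 2n-1 and i+j ≤ 2n, ordered by inclusion, where n ≥ 3. Then no interval [i,j] with j-i ≥ 3 belongs to an antichain of cardinality n-1, and consequently {[k,k+2] : 1 ≤ k ≤ n-1} is the unique maximal (n-1)-antichain of P. -/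
/-!
In an antichain of intervals, distinct members have distinct left endpoints, and the right
endpoints increase strictly with the left ones; hence the endpoint sums `i + j` increase by at
least `2` from one member to the next. Fix `[i, j]` in an antichain `A` of the poset. At most `i`
members start at or before `i`, and the members starting after `i` have pairwise distinct values
of `⌈(i' + j') / 2⌉` in `(⌈(i + j) / 2⌉, n]`. So `n - 1 = A.card ≤ i + n - ⌈(i + j) / 2⌉`, which
forces `j ≤ i + 2`; such an interval lies in `[k, k + 2]` for `k = max 1 (j - 2)`.
-/

namespace IntervalAntichain

def IntervalLE (p q : ℕ × ℕ) : Prop := q.1 ≤ p.1 ∧ p.2 ≤ q.2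

variable {A : Finset (ℕ × ℕ)}

lemma fst_injOn (hA : IsAntichain IntervalLE (A : Set (ℕ × ℕ))) :
    Set.InjOn Prod.fst (A : Set (ℕ × ℕ)) := by
  intro q hq r hr h
  by_contra hne
  rcases le_total q.2 r.2 with h2 | h2
  · exact hA hq hr hne ⟨h.ge, h2⟩
  · exact hA hr hq (Ne.symm hne) ⟨h.le, h2⟩

lemma snd_lt_snd_of_fst_lt (hA : IsAntichain IntervalLE (A : Set (ℕ × ℕ))) {q r : ℕ × ℕ}
    (hq : q ∈ A) (hr : r ∈ A) (h : q.1 < r.1) : q.2 < r.2 := by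
  by_contra! hle
  exact hA (Finset.mem_coe.2 hr) hq (fun hrq => h.ne (congrArg Prod.fst hrq).symm) ⟨h.le, hle⟩

lemma card_filter_fst_le (hA : IsAntichain IntervalLE (A : Set (ℕ × ℕ)))
    (hpos : ∀ q ∈ A, 1 ≤ q.1) (a : ℕ) : (A.filter (·.1 ≤ a)).card ≤ a := by
  calc (A.filter (·.1 ≤ a)).card ≤ (Finset.Icc 1 a).card := by
        refine Finset.card_le_card_of_injOn Prod.fst (fun q hq => ?_)
          ((fst_injOn hA).mono (Finset.coe_subset.2 (Finset.filter_subset _ _)))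
        obtain ⟨hqA, hqa⟩ := Finset.mem_filter.1 hq
        exact Finset.mem_Icc.2 ⟨hpos q hqA, hqa⟩
    _ = a := by simp

lemma card_filter_fst_gt (hA : IsAntichain IntervalLE (A : Set (ℕ × ℕ))) {n : ℕ}
    (hsum : ∀ q ∈ A, q.1 + q.2 ≤ 2 * n) {p : ℕ × ℕ} (hp : p ∈ A) :
    (A.filter (p.1 < ·.1)).card ≤ n - (p.1 + p.2 + 1) / 2 := by
  have hgap : ∀ q ∈ A, ∀ r ∈ A, q.1 < r.1 → q.1 + q.2 + 2 ≤ r.1 + r.2 := fun q hq r hr h =>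
    by have := snd_lt_snd_of_fst_lt hA hq hr h; omega
  calc (A.filter (p.1 < ·.1)).card ≤ (Finset.Ioc ((p.1 + p.2 + 1) / 2) n).card := by
        refine Finset.card_le_card_of_injOn (fun q => (q.1 + q.2 + 1) / 2) (fun q hq => ?_)
          (fun q hq r hr h => ?_)
        · simp only [Finset.mem_coe] at hq ⊢
          obtain ⟨hqA, hpq⟩ := Finset.mem_filter.1 hq
          have := hgap p hp q hqA hpq
          have := hsum q hqA
          exact Finset.mem_Ioc.2 ⟨by omega, by omega⟩
        · have hqA := (Finset.mem_filter.1 hq).1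
          have hrA := (Finset.mem_filter.1 hr).1
          simp only at h
          rcases lt_trichotomy q.1 r.1 with hlt | heq | hgt
          · have := hgap q hqA r hrA hlt; omega
          · exact fst_injOn hA hqA hrA heq
          · have := hgap r hrA q hqA hgt; omega
    _ = n - (p.1 + p.2 + 1) / 2 := Nat.card_Ioc _ _

lemma card_le_of_mem (hA : IsAntichain IntervalLE (A : Set (ℕ × ℕ))) {n : ℕ}
    (hpos : ∀ q ∈ A, 1 ≤ q.1) (hsum : ∀ q ∈ A, q.1 + q.2 ≤ 2 * n) {p : ℕ × ℕ} (hp : p ∈ A) :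
    A.card ≤ p.1 + (n - (p.1 + p.2 + 1) / 2) := by
  rw [← Finset.card_filter_add_card_filter_not (·.1 ≤ p.1)]
  have hright : A.filter (fun q => ¬q.1 ≤ p.1) = A.filter (p.1 < ·.1) := by
    simp only [not_le]
  rw [hright]
  exact add_le_add (card_filter_fst_le hA hpos p.1) (card_filter_fst_gt hA hsum hp)

end IntervalAntichain

open IntervalAntichain in
theorem stmt_7_general (n : ℕ)
    (X : Finset (ℕ × ℕ)) (hX : X = (Finset.Icc 1 (n - 1)).image (fun k => (k, k + 2))) :
    (∀ A : Finset (ℕ × ℕ),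
      (∀ p ∈ A, 1 ≤ p.1 ∧ p.1 ≤ p.2 ∧ p.2 ≤ 2 * n - 1 ∧ p.1 + p.2 ≤ 2 * n) →
      (∀ p ∈ A, ∀ q ∈ A, p ≠ q → ¬(q.1 ≤ p.1 ∧ p.2 ≤ q.2)) →
      A.card = n - 1 →
      (∀ p ∈ A, p.2 - p.1 < 3) ∧ (∀ p ∈ A, ∃ q ∈ X, q.1 ≤ p.1 ∧ p.2 ≤ q.2)) := by
  intro A hmem hanti hcard
  have hA : IsAntichain IntervalLE (A : Set (ℕ × ℕ)) := fun p hp q hq hpq => hanti p hp q hq hpq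
  have hwidth : ∀ p ∈ A, p.2 ≤ p.1 + 2 := fun p hp => by
    have := card_le_of_mem hA (fun q hq => (hmem q hq).1) (fun q hq => (hmem q hq).2.2.2) hp
    have := (hmem p hp).2.2.2
    omega
  refine ⟨fun p hp => by have := hwidth p hp; omega, fun p hp => ?_⟩
  have hpos : 0 < A.card := Finset.card_pos.2 ⟨p, hp⟩
  obtain ⟨hp1, -, -, hsum⟩ := hmem p hp
  have := hwidth p hp
  subst hX
  exact ⟨(max 1 (p.2 - 2), max 1 (p.2 - 2) + 2),
    Finset.mem_image.2 ⟨_, Finset.mem_Icc.2 ⟨le_max_left _ _, by omega⟩, rfl⟩, by omega, by omega⟩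

/-- Let `P` be the poset of intervals `[i,j]` with `1 ≤ i ≤ j ≤ 2n-1` and
`i + j ≤ 2n`, ordered by inclusion, where `n ≥ 3`.  Then no interval `[i,j]` with
`j - i ≥ 3` belongs to an antichain of cardinality `n-1`, and consequently
`{[k,k+2] : 1 ≤ k ≤ n-1}` is the unique maximal `(n-1)`-antichain of `P`: every antichain
of cardinality `n-1` is contained in the order ideal it generates. -/
theorem stmt_7 (n : ℕ) (hn : 3 ≤ n)
    (X : Finset (ℕ × ℕ)) (hX : X = (Finset.Icc 1 (n - 1)).image (fun k => (k, k + 2))) :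
    (∀ A : Finset (ℕ × ℕ),
      (∀ p ∈ A, 1 ≤ p.1 ∧ p.1 ≤ p.2 ∧ p.2 ≤ 2 * n - 1 ∧ p.1 + p.2 ≤ 2 * n) →
      (∀ p ∈ A, ∀ q ∈ A, p ≠ q → ¬(q.1 ≤ p.1 ∧ p.2 ≤ q.2)) →
      A.card = n - 1 →
      (∀ p ∈ A, p.2 - p.1 < 3) ∧ (∀ p ∈ A, ∃ q ∈ X, q.1 ≤ p.1 ∧ p.2 ≤ q.2)) :=
  stmt_7_general n X hX
end

section
/- In the poset P of intervals [i,j] ⊆ [1,n] ordered by inclusion, the set X[i,j] of elements comparable to a fixed [i,j], together with the n - (j-i) - 1 chains L[s, s+(j-i)] for 1 ≤ s < i and R[s, s+(j-i)] for i < s ≤ n-(j-i), covers all of P. -/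
/-!
An interval `[u,v]` not comparable with `[i,j]` either lies to the left (`u < i`, `v < j`) or to
the right (`i < u`, `j < v`) of it. With `a = j - i`, a left one belongs to `L[s,s+a]` for
`s = max u (v - a)`: it starts at `s` when it has length at most `a`, and otherwise it ends at
`s + a`. Symmetrically a right one belongs to `R[s,s+a]` for `s = min u (v - a)`.
-/

/-- `[u,v] ∈ L[s,s+a]`. -/
def InLChain (a s u v : ℕ) : Prop :=
  (u = s ∧ s ≤ v ∧ v ≤ s + a) ∨ (1 ≤ u ∧ u ≤ s ∧ v = s + a)

/-- `[u,v] ∈ R[s,s+a]` inside `[1,n]`. -/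
def InRChain (n a s u v : ℕ) : Prop :=
  (u = s ∧ s + a ≤ v ∧ v ≤ n) ∨ (s ≤ u ∧ u ≤ s + a ∧ v = s + a)

theorem inLChain_max {a u v : ℕ} (hu : 1 ≤ u) (huv : u ≤ v) :
    InLChain a (max u (v - a)) u v := by
  unfold InLChain
  omega

theorem inRChain_min {n a u v : ℕ} (hv : v ≤ n) (huv : u ≤ v) (hav : a ≤ v) :
    InRChain n a (min u (v - a)) u v := by
  unfold InRChain
  omega

theorem stmt_13_general (n i j : ℕ) :
    ∀ u v : ℕ, 1 ≤ u → u ≤ v → v ≤ n →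
      -- (u,v) is comparable with (i,j)
      ((i ≤ u ∧ v ≤ j) ∨ (u ≤ i ∧ j ≤ v)) ∨
      -- (u,v) lies in some chain L[s, s+(j-i)] with 1 ≤ s < i
      (∃ s, 1 ≤ s ∧ s < i ∧
        ((u = s ∧ s ≤ v ∧ v ≤ s + (j - i)) ∨ (1 ≤ u ∧ u ≤ s ∧ v = s + (j - i)))) ∨
      -- (u,v) lies in some chain R[s, s+(j-i)] with i < s ≤ n-(j-i)
      (∃ s, i < s ∧ s ≤ n - (j - i) ∧
        ((u = s ∧ s + (j - i) ≤ v ∧ v ≤ n) ∨ (s ≤ u ∧ u ≤ s + (j - i) ∧ v = s + (j - i)))) := by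
  intro u v hu huv hv
  by_cases hcomp : (i ≤ u ∧ v ≤ j) ∨ (u ≤ i ∧ j ≤ v)
  · exact Or.inl hcomp
  rcases lt_or_ge u i with hui | hiu
  · have hvj : v < j := by omega
    exact Or.inr <| Or.inl ⟨max u (v - (j - i)), by omega, by omega, inLChain_max hu huv⟩
  · have hjv : j < v := by omega
    exact Or.inr <| Or.inr
      ⟨min u (v - (j - i)), by omega, by omega, inRChain_min hv huv (by omega)⟩

/-- In the poset of intervals `[u,v] ⊆ [1,n]` ordered by inclusion, the set
`X[i,j]` of elements comparable to a fixed `[i,j]`, together with the chains `L[s,s+a]`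
for `1 ≤ s < i` and `R[s,s+a]` for `i < s ≤ n-a` (where `a = j-i`), covers all of `P`.
Here `L[s,s+a] = {[s,t] : s ≤ t ≤ s+a} ∪ {[r,s+a] : 1 ≤ r ≤ s}` and
`R[s,s+a] = {[s,t] : s+a ≤ t ≤ n} ∪ {[r,s+a] : s ≤ r ≤ s+a}`. -/
theorem stmt_13 (n i j : ℕ) (h1 : 1 ≤ i) (h2 : i ≤ j) (h3 : j ≤ n) :
    ∀ u v : ℕ, 1 ≤ u → u ≤ v → v ≤ n →
      -- (u,v) is comparable with (i,j)
      ((i ≤ u ∧ v ≤ j) ∨ (u ≤ i ∧ j ≤ v)) ∨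
      -- (u,v) lies in some chain L[s, s+(j-i)] with 1 ≤ s < i
      (∃ s, 1 ≤ s ∧ s < i ∧
        ((u = s ∧ s ≤ v ∧ v ≤ s + (j - i)) ∨ (1 ≤ u ∧ u ≤ s ∧ v = s + (j - i)))) ∨
      -- (u,v) lies in some chain R[s, s+(j-i)] with i < s ≤ n-(j-i)
      (∃ s, i < s ∧ s ≤ n - (j - i) ∧
        ((u = s ∧ s + (j - i) ≤ v ∧ v ≤ n) ∨ (s ≤ u ∧ u ≤ s + (j - i) ∧ v = s + (j - i)))) :=
  stmt_13_general n i j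
end

section
/- The root poset of type F_4 possesses an order ideal I (the ideal generated by the set of roots of height 4) admitting a nontrivial poset automorphism of order 2, while the full root poset of F_4 admits no nontrivial automorphism. -/
/-- The 24 positive roots of type `F_4`, given by their coefficient vectors with respect to
the four simple roots; the partial order is the coordinatewise one, i.e. `x ≤ y` iff
`y - x` is a nonnegative combination of simple roots. -/
def F4PosRoots : Set (Fin 4 → ℕ) :=
  {![1,0,0,0], ![0,1,0,0], ![0,0,1,0], ![0,0,0,1],
   ![1,1,0,0], ![0,1,1,0], ![0,0,1,1],
   ![1,1,1,0], ![0,1,2,0], ![0,1,1,1],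
   ![1,1,2,0], ![1,1,1,1], ![0,1,2,1],
   ![1,2,2,0], ![1,1,2,1], ![0,1,2,2],
   ![1,2,2,1], ![1,1,2,2],
   ![1,2,3,1], ![1,2,2,2],
   ![1,2,3,2],
   ![1,2,4,2],
   ![1,3,4,2],
   ![2,3,4,2]}

/-- The order ideal of the `F_4` root poset generated by the roots of height `4`
(coefficient sum `5`). -/
def F4Ideal : Set (Fin 4 → ℕ) :=
  {x ∈ F4PosRoots | ∃ a ∈ F4PosRoots, a 0 + a 1 + a 2 + a 3 = 5 ∧ x ≤ a}

/-!
Write roots by their coefficient strings, so `1120 = α₁ + α₂ + 2α₃`. The ideal consists of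
the `16` roots of height at most `4`, and exchanging `α₁ ↔ α₄`, `α₂ ↔ α₃`, `1100 ↔ 0011`,
`1110 ↔ 0111`, `1120 ↔ 0121` and `1220 ↔ 0122` is an order-preserving involution of it.

For rigidity of the whole root poset: an automorphism preserves, for every root `x`, the number
of multichains `x ≤ y₁ ≤ y₂ ≤ y₃` and the number of multichains `y₃ ≤ y₂ ≤ y₁ ≤ x`, and these two
counts already separate all `24` roots, so every automorphism fixes every root.
-/

open Finset OrderDual Function

section Multichains

variable {α β : Type*} [Preorder α] [Fintype α] [DecidableLE α]
  [Preorder β] [Fintype β] [DecidableLE β]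

/-- `multichainsAbove k x` is the number of multichains `x ≤ y₁ ≤ ⋯ ≤ yₖ`. -/
def multichainsAbove : ℕ → α → ℕ
  | 0, _ => 1
  | k + 1, x => ∑ y with x ≤ y, multichainsAbove k y

theorem multichainsAbove_orderIso (e : α ≃o β) (k : ℕ) (x : α) :
    multichainsAbove k (e x) = multichainsAbove k x := by
  induction k generalizing x with
  | zero => rfl
  | succ k ih =>
    simp only [multichainsAbove]
    exact (Finset.sum_equiv e.toEquiv (by simp) fun y _ => (ih y).symm).symm

theorem OrderIso.eq_refl_of_injective_multichainsAbove (k : ℕ)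
    (hinj : Injective fun x : α => (multichainsAbove k x, multichainsAbove k (toDual x)))
    (ψ : α ≃o α) : ψ = OrderIso.refl α :=
  OrderIso.ext <| funext fun x => hinj <|
    Prod.ext (multichainsAbove_orderIso ψ k x) (multichainsAbove_orderIso ψ.dual k (toDual x))

end Multichains

def Function.Involutive.toOrderIso {α : Type*} [Preorder α] {f : α → α} (hf : Involutive f)
    (hmono : Monotone f) : α ≃o α :=
  (hf.toPerm f).toOrderIso hmono hmono

theorem Function.Involutive.toOrderIso_trans_self {α : Type*} [Preorder α] {f : α → α}
    (hf : Involutive f) (hmono : Monotone f) :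
    (hf.toOrderIso hmono).trans (hf.toOrderIso hmono) = OrderIso.refl α :=
  OrderIso.ext <| funext hf

instance {ι : Type*} {π : ι → Type*} [Fintype ι] [∀ i, LE (π i)] [∀ i, DecidableLE (π i)] :
    DecidableLE (∀ i, π i) :=
  fun _ _ => decidable_of_iff _ Pi.le_def.symm

set_option synthInstance.maxSize 1000 in
instance : Fintype F4PosRoots := by unfold F4PosRoots; infer_instance

instance : DecidablePred (· ∈ F4PosRoots) := by unfold F4PosRoots; infer_instance

instance : DecidablePred (· ∈ F4Ideal) := fun x =>
  decidable_of_iff (x ∈ F4PosRoots ∧ ∃ a : F4PosRoots, a.1 0 + a.1 1 + a.1 2 + a.1 3 = 5 ∧ x ≤ a)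
    (by simp [F4Ideal]; grind)

instance : Fintype F4Ideal :=
  Fintype.ofFinset {x ∈ F4PosRoots.toFinset | x ∈ F4Ideal} fun x => by simpa using fun h => h.1

theorem F4PosRoots.injective_multichainsAbove_three :
    Injective fun x : F4PosRoots => (multichainsAbove 3 x, multichainsAbove 3 (toDual x)) := by
  decide

namespace F4Ideal

def swapPerm : Equiv.Perm (Fin 4 → ℕ) :=
  Equiv.swap ![1,0,0,0] ![0,0,0,1] * Equiv.swap ![0,1,0,0] ![0,0,1,0] *
  Equiv.swap ![1,1,0,0] ![0,0,1,1] * Equiv.swap ![1,1,1,0] ![0,1,1,1] *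
  Equiv.swap ![1,1,2,0] ![0,1,2,1] * Equiv.swap ![1,2,2,0] ![0,1,2,2]

theorem swapPerm_mem : ∀ x : F4Ideal, swapPerm x ∈ F4Ideal := by decide

def involution (x : F4Ideal) : F4Ideal := ⟨swapPerm x, swapPerm_mem x⟩

set_option maxRecDepth 4000 in
theorem involution_involutive : Involutive involution := fun x =>
  Subtype.ext <| (by decide : ∀ x : F4Ideal, swapPerm (swapPerm x) = x) x

theorem involution_monotone : Monotone involution := by
  change ∀ x y, x ≤ y → involution x ≤ involution y
  decide

theorem exists_involution_ne : ∃ x, involution x ≠ x :=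
  ⟨⟨![1,0,0,0], by decide⟩, fun h => absurd (congrArg Subtype.val h) (by decide)⟩

end F4Ideal

/-- The root poset of type `F_4` possesses an order ideal `I` (the ideal
generated by the roots of height `4`) admitting a nontrivial poset automorphism of order
`2`, while the full root poset of `F_4` admits no nontrivial automorphism. -/
theorem stmt_19 :
    (∃ φ : F4Ideal ≃o F4Ideal, φ ≠ OrderIso.refl F4Ideal ∧
      φ.trans φ = OrderIso.refl F4Ideal) ∧
    (∀ ψ : F4PosRoots ≃o F4PosRoots, ψ = OrderIso.refl F4PosRoots) := by
  refine ⟨⟨F4Ideal.involution_involutive.toOrderIso F4Ideal.involution_monotone, ?_,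
    Involutive.toOrderIso_trans_self _ _⟩, OrderIso.eq_refl_of_injective_multichainsAbove 3
    F4PosRoots.injective_multichainsAbove_three⟩
  obtain ⟨x, hx⟩ := F4Ideal.exists_involution_ne
  exact fun h => hx (DFunLike.congr_fun h x)
end
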